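/- arXiv:2011.14856 — 3 statements merged into one kernel-verified Lean document; each statement's English description precedes it below -/
import Mathlib

section
/- If a graph-walking automaton is reversible, then any infinite computation of it must pass through the initial configuration infinitely often; equivalently, a reversible automaton can loop only through a cycle containing the initial configuration. -/
attribute [local instance 10] Classical.propDecidable

/-- A signature: directions with an involutive opposite, node labels,
initial labels, and the set of directions allowed at each label. -/
structure Signature where
  Dir : Type
  neg : Dir → Dir
  neg_neg : ∀ d, neg (neg d) = d
  Lab : Type
  isInit : Lab → Bool
  dirs : Lab → Set Dir

/-- A finite graph over a signature. -/
structure SGraph (S : Signature) where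
  V : Type
  fin : Finite V
  v0 : V
  lab : V → S.Lab
  move : V → S.Dir → Option V
  move_inv : ∀ v d w, move v d = some w → move w (S.neg d) = some v
  move_defined : ∀ v d, (move v d).isSome ↔ d ∈ S.dirs (lab v)
  init_iff : ∀ v, S.isInit (lab v) = true ↔ v = v0

/-- A deterministic graph-walking automaton over a signature. -/
structure GWA (S : Signature) where
  Q : Type
  finQ : Finite Q
  q0 : Q
  F : Q → S.Lab → Bool
  δ : Q → S.Lab → Option (Q × S.Dir)
  δ_dir : ∀ q a p d, δ q a = some (p, d) → d ∈ S.dirs a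
  δ_not_F : ∀ q a, F q a = true → δ q a = none

namespace GWA

variable {S : Signature}

/-- One step of the computation, over an abstract node set with a move
function and a labelling. -/
def stepOn (A : GWA S) {V : Type} (move : V → S.Dir → Option V) (lab : V → S.Lab) :
    A.Q × V → Option (A.Q × V) := fun c =>
  if A.F c.1 (lab c.2) = true then none
  else match A.δ c.1 (lab c.2) with
    | none => none
    | some (p, d) => (move c.2 d).map fun w => (p, w)

/-- The configuration after `t` steps, starting from configuration `c`. -/
def runOn (A : GWA S) {V : Type} (move : V → S.Dir → Option V) (lab : V → S.Lab)
    (c : A.Q × V) : ℕ → Option (A.Q × V)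
  | 0 => some c
  | n + 1 => (runOn A move lab c n).bind (A.stepOn move lab)

def runFrom (A : GWA S) (G : SGraph S) (c : A.Q × G.V) : ℕ → Option (A.Q × G.V) :=
  A.runOn G.move G.lab c

/-- The computation of `A` on `G`, from the initial configuration. -/
def run (A : GWA S) (G : SGraph S) : ℕ → Option (A.Q × G.V) :=
  A.runFrom G (A.q0, G.v0)

def stateAt (A : GWA S) (G : SGraph S) (c : A.Q × G.V) (t : ℕ) : Option A.Q :=
  (A.runFrom G c t).map Prod.fst

def nodeAt (A : GWA S) (G : SGraph S) (c : A.Q × G.V) (t : ℕ) : Option G.V :=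
  (A.runFrom G c t).map Prod.snd

/-- The direction used by the transition taken at time `t`. -/
def dirAt (A : GWA S) (G : SGraph S) (c : A.Q × G.V) (t : ℕ) : Option S.Dir :=
  (A.runFrom G c t).bind fun x => (A.δ x.1 (G.lab x.2)).map Prod.snd

def Accepts (A : GWA S) (G : SGraph S) : Prop :=
  ∃ n c, A.run G n = some c ∧ A.F c.1 (G.lab c.2) = true

/-- A GWA is returning if it can accept only at the initial node. -/
def Returning (A : GWA S) : Prop :=
  ∀ q a, A.F q a = true → S.isInit a = true

/-- A GWA is halting if its computation on every (finite) graph is finite. -/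
def Halting (A : GWA S) : Prop :=
  ∀ G : SGraph S, ∃ n, A.run G n = none

/-- Direction-determinate: every state is entered in a unique direction. -/
def DirDet (A : GWA S) (d : A.Q → S.Dir) : Prop :=
  ∀ p a q d', A.δ p a = some (q, d') → d' = d q

/-- Backward determinism of the transition function. -/
def BackDet (A : GWA S) (d : A.Q → S.Dir) : Prop :=
  ∀ a q p1 p2, A.δ p1 a = some (q, d q) → A.δ p2 a = some (q, d q) → p1 = p2

/-- A reversible graph-walking automaton. -/
def Reversible (A : GWA S) : Prop :=
  (∃ d : A.Q → S.Dir, A.DirDet d ∧ A.BackDet d) ∧ A.Returning ∧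
    ∀ a q1 q2, A.F q1 a = true → A.F q2 a = true → q1 = q2

/-- The state `q` is entered via a transition in direction `d` taken during
the computation of `A` on `G`. -/
def EnteredVia (A : GWA S) (G : SGraph S) (d : S.Dir) (q : A.Q) : Prop :=
  ∃ t c, A.run G t = some c ∧ A.δ c.1 (G.lab c.2) = some (q, d)

end GWA

namespace GWA

variable {S : Signature}

lemma stepOn_some {A : GWA S} {V : Type} {move : V → S.Dir → Option V} {lab : V → S.Lab}
    {c x : A.Q × V} (h : A.stepOn move lab c = some x) :
    ∃ dd, A.δ c.1 (lab c.2) = some (x.1, dd) ∧ move c.2 dd = some x.2 := by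
  unfold stepOn at h
  split at h
  · simp at h
  · revert h
    split
    · simp
    · rename_i p dd hd
      intro h
      rw [Option.map_eq_some_iff] at h
      obtain ⟨w, hw, hx⟩ := h
      exact ⟨dd, by simp [hd, ← hx], by simp [hw, ← hx]⟩

lemma runOn_add (A : GWA S) {V : Type} (move : V → S.Dir → Option V) (lab : V → S.Lab)
    (c : A.Q × V) (m n : ℕ) :
    A.runOn move lab c (m + n) = (A.runOn move lab c m).bind
      (fun x => A.runOn move lab x n) := by
  induction n with
  | zero => simp [runOn]
  | succ n ih =>
    show (A.runOn move lab c (m + n)).bind _ = _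
    rw [ih, Option.bind_assoc]
    rfl

end GWA

theorem stmt1_aux (S : Signature) (A : GWA S) (hrev : A.Reversible)
    (G : SGraph S) (hinf : ∀ t, A.run G t ≠ none) :
    ∀ N, ∃ t, N < t ∧ A.run G t = some (A.q0, G.v0) := by
  classical
  haveI := A.finQ
  haveI := G.fin
  obtain ⟨⟨d, hdd, hbd⟩, hret, hF⟩ := hrev
  -- injectivity of the step function
  have hinj : ∀ c1 c2 x, A.stepOn G.move G.lab c1 = some x →
      A.stepOn G.move G.lab c2 = some x → c1 = c2 := by
    intro c1 c2 x h1 h2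
    obtain ⟨d1, hδ1, hm1⟩ := GWA.stepOn_some h1
    obtain ⟨d2, hδ2, hm2⟩ := GWA.stepOn_some h2
    have hd1 : d1 = d x.1 := hdd _ _ _ _ hδ1
    have hd2 : d2 = d x.1 := hdd _ _ _ _ hδ2
    subst hd1; subst hd2
    have hv1 := G.move_inv _ _ _ hm1
    have hv2 := G.move_inv _ _ _ hm2
    have hv : c1.2 = c2.2 := by
      rw [hv1] at hv2; exact Option.some_injective _ hv2
    have hq : c1.1 = c2.1 := by
      apply hbd (G.lab c1.2) x.1 _ _ hδ1
      rw [hv]; exact hδ2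
    exact Prod.ext hq hv
  have hc : ∀ t, ∃ x, A.run G t = some x := by
    intro t
    rcases h : A.run G t with _ | x
    · exact absurd h (hinf t)
    · exact ⟨x, rfl⟩
  choose c hcr using hc
  have hc0 : c 0 = (A.q0, G.v0) := by
    have : A.run G 0 = some (A.q0, G.v0) := rfl
    rw [hcr 0] at this
    exact Option.some_injective _ this
  have hstep : ∀ t, A.stepOn G.move G.lab (c t) = some (c (t + 1)) := by
    intro t
    have : A.run G (t + 1) = (A.run G t).bind (A.stepOn G.move G.lab) := rfl
    rw [hcr t, hcr (t + 1)] at this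
    exact this.symm
  -- pigeonhole
  obtain ⟨t1, t2, hne, heq⟩ := Finite.exists_ne_map_eq_of_infinite c
  wlog hlt : t1 < t2 generalizing t1 t2
  · exact this t2 t1 hne.symm heq.symm (by omega)
  -- back up to time 0
  have hback : ∀ k, k ≤ t1 → c (t1 - k) = c (t2 - k) := by
    intro k
    induction k with
    | zero => intro _; simpa using heq
    | succ k ih =>
      intro hk
      have hk' : k ≤ t1 := by omega
      have e1 : t1 - k = (t1 - (k + 1)) + 1 := by omega
      have e2 : t2 - k = (t2 - (k + 1)) + 1 := by omega
      have s1 := hstep (t1 - (k + 1))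
      have s2 := hstep (t2 - (k + 1))
      rw [← e1] at s1
      rw [← e2] at s2
      rw [ih hk'] at s1
      exact hinj _ _ _ s1 s2
  have hper : c (t2 - t1) = (A.q0, G.v0) := by
    have := hback t1 le_rfl
    simp at this
    rw [← this, hc0]
  set p := t2 - t1 with hp
  have hppos : 0 < p := by omega
  have hrunp : A.run G p = some (A.q0, G.v0) := by rw [hcr p, hper]
  have hmul : ∀ n, A.run G (n * p) = some (A.q0, G.v0) := by
    intro n
    induction n with
    | zero => simpa [hc0] using hcr 0
    | succ n ih =>
      have : (n + 1) * p = n * p + p := by ring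
      rw [this]
      show A.runOn G.move G.lab (A.q0, G.v0) (n * p + p) = _
      rw [GWA.runOn_add]
      have ih' : A.runOn G.move G.lab (A.q0, G.v0) (n * p) = some (A.q0, G.v0) := ih
      rw [ih']
      exact hrunp
  intro N
  refine ⟨(N + 1) * p, ?_, hmul (N + 1)⟩
  calc N < N + 1 := by omega
    _ ≤ (N + 1) * p := Nat.le_mul_of_pos_right _ hppos

/-- an infinite computation of a reversible GWA passes through
the initial configuration infinitely often. -/
theorem stmt1 (S : Signature) (A : GWA S) (hrev : A.Reversible)
    (G : SGraph S) (hinf : ∀ t, A.run G t ≠ none) :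
    ∀ N, ∃ t, N < t ∧ A.run G t = some (A.q0, G.v0) :=
  stmt1_aux S A hrev G hinf
end

section
/- If a reversible graph-walking automaton has an initial state q₀ that is not in the image of any transition (i.e., no transition leads into q₀), then the automaton halts on every finite input graph. -/
attribute [local instance 10] Classical.propDecidable

lemma step_extract {S : Signature} (A : GWA S) {V : Type} (move : V → S.Dir → Option V)
    (lab : V → S.Lab) {c e : A.Q × V} (h : A.stepOn move lab c = some e) :
    ∃ d, A.δ c.1 (lab c.2) = some (e.1, d) ∧ move c.2 d = some e.2 := by
  unfold GWA.stepOn at h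
  split at h
  · exact absurd h (by simp)
  · cases hδ : A.δ c.1 (lab c.2) with
    | none => rw [hδ] at h; simp at h
    | some pd =>
      obtain ⟨p, d⟩ := pd
      rw [hδ] at h
      simp only [Option.map_eq_some_iff] at h
      obtain ⟨w, hw, he⟩ := h
      exact ⟨d, by rw [← he], by rw [← he]; exact hw⟩

/-- a reversible GWA whose initial state is not reenterable
halts on every finite input graph. -/
theorem stmt2 (S : Signature) (A : GWA S) (hrev : A.Reversible)
    (hq0 : ∀ p a c, A.δ p a = some c → c.1 ≠ A.q0) :
    A.Halting := by
  obtain ⟨⟨dm, hdd, hbd⟩, -, -⟩ := hrev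
  intro G
  by_contra hno
  push_neg at hno
  have hsome : ∀ n, ∃ c, A.run G n = some c := by
    intro n
    cases h : A.run G n with
    | none => exact absurd h (hno n)
    | some c => exact ⟨c, rfl⟩
  -- injectivity of the step function
  have hinj : ∀ c1 c2 e, A.stepOn G.move G.lab c1 = some e →
      A.stepOn G.move G.lab c2 = some e → c1 = c2 := by
    intro c1 c2 e h1 h2
    obtain ⟨d1, hδ1, hm1⟩ := step_extract A G.move G.lab h1
    obtain ⟨d2, hδ2, hm2⟩ := step_extract A G.move G.lab h2
    have hd1 : d1 = dm e.1 := hdd _ _ _ _ hδ1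
    have hd2 : d2 = dm e.1 := hdd _ _ _ _ hδ2
    subst hd1; subst hd2
    have hv1 : G.move e.2 (S.neg (dm e.1)) = some c1.2 := G.move_inv _ _ _ hm1
    have hv2 : G.move e.2 (S.neg (dm e.1)) = some c2.2 := G.move_inv _ _ _ hm2
    have hv : c1.2 = c2.2 := by
      rw [hv1] at hv2; exact Option.some_inj.mp hv2
    have hq : c1.1 = c2.1 := by
      apply hbd (G.lab c1.2) e.1 _ _ hδ1
      rw [hv]; exact hδ2
    exact Prod.ext hq hv
  -- step back: equal configurations at n and n+k imply equality at 0 and k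
  have hback : ∀ n k, A.run G n = A.run G (n + k) → A.run G 0 = A.run G k := by
    intro n
    induction n with
    | zero => intro k h; simpa using h
    | succ m ih =>
      intro k h
      apply ih
      obtain ⟨c, hc⟩ := hsome m
      obtain ⟨c', hc'⟩ := hsome (m + k)
      obtain ⟨e, he⟩ := hsome (m + 1)
      have hs : A.stepOn G.move G.lab c = some e := by
        have : A.run G (m + 1) = (A.run G m).bind (A.stepOn G.move G.lab) := rfl
        rw [he, hc] at this; exact this.symm
      have hs' : A.stepOn G.move G.lab c' = some e := by
        have : A.run G (m + k + 1) = (A.run G (m + k)).bind (A.stepOn G.move G.lab) := rfl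
        rw [show m + k + 1 = m + 1 + k by ring, ← h, he, hc'] at this
        exact this.symm
      rw [hc, hc', hinj c c' e hs hs']
  -- find a repetition
  have : ∃ a b : ℕ, a ≠ b ∧ A.run G a = A.run G b := by
    haveI i1 : Finite G.V := G.fin
    haveI i2 : Finite A.Q := A.finQ
    obtain ⟨a, b, hab, h⟩ :=
      Finite.exists_ne_map_eq_of_infinite (fun n => (hsome n).choose)
    refine ⟨a, b, hab, ?_⟩
    rw [(hsome a).choose_spec, (hsome b).choose_spec]
    simpa using h
  obtain ⟨a, b, hab, h⟩ := this
  wlog hlt : a < b generalizing a b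
  · exact this b a hab.symm h.symm (by omega)
  have hk : A.run G 0 = A.run G (b - a) := by
    apply hback a (b - a)
    rwa [show a + (b - a) = b by omega]
  have hkpos : 0 < b - a := by omega
  obtain ⟨k, hkeq⟩ : ∃ k, b - a = k + 1 := ⟨b - a - 1, by omega⟩
  obtain ⟨c, hc⟩ := hsome k
  have hstep : A.stepOn G.move G.lab c = some (A.q0, G.v0) := by
    have h1 : A.run G (k + 1) = (A.run G k).bind (A.stepOn G.move G.lab) := rfl
    have h0 : A.run G 0 = some (A.q0, G.v0) := rfl
    rw [hkeq] at hk
    rw [← hk, h0, hc] at h1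
    exact h1.symm
  obtain ⟨d, hδ, -⟩ := step_extract A G.move G.lab hstep
  exact hq0 _ _ _ hδ rfl
end

section
/- In the diode element E_i, a walker that repeats a periodic sequence of moves over nodes labelled m (with net drift in direction a) and that, upon reaching the node pair {u_M, u_{-M}}, makes teleporting moves in directions ±b_i given by a string w ∈ {b_i, -b_i}*, reaches the segment beyond u_M (towards u_{2M}) without returning to u₀ only if |w| is even; if |w| is odd the walker is teleported to u_{-M} and, drifting in direction a, returns to u₀. -/
attribute [local instance 10] Classical.propDecidable

/-! The diode signature S_k (with r = ⌊(k-2)/2⌋) and the diode element E_i. -/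

/-- Directions: `inl true` = a, `inl false` = -a, `inr (i, true)` = b_{i+1},
`inr (i, false)` = -b_{i+1}. -/
abbrev DirK (r : ℕ) := Bool ⊕ (Fin r × Bool)

/-- Node labels: `inl (i, true)` = m_{i+1}, `inl (i, false)` = m_{-(i+1)},
`inr 0` = m, `inr 1` = m_e, `inr 2` = m_a. -/
abbrev LabK (r : ℕ) := (Fin r × Bool) ⊕ Fin 3

def negK (r : ℕ) : DirK r → DirK r
  | .inl s => .inl (!s)
  | .inr (i, s) => .inr (i, !s)

/-- The signature S_k. -/
def SK (r : ℕ) : Signature where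
  Dir := DirK r
  neg := negK r
  neg_neg := by rintro (s | ⟨i, s⟩) <;> simp [negK]
  Lab := LabK r
  isInit := fun _ => false
  dirs := fun l => match l with
    | .inl (i, _) => {Sum.inl false, Sum.inr (i, true), Sum.inr (i, false)}
    | .inr j =>
        if j.val = 0 then Set.univ
        else if j.val = 1 then
          {d | d = Sum.inl true ∨ d = Sum.inl false ∨
            ∃ h : 0 < r, d = Sum.inr (⟨0, h⟩, true)}
        else
          {d | d = Sum.inl true ∨ ∃ h : 0 < r, d = Sum.inr (⟨0, h⟩, false)}

/-- M = (4nk)!. -/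
def bigM (n k : ℕ) : ℕ := (4 * n * k).factorial

/-- Nodes of a diode element: the main cycle u_0, …, u_{8M-1}, the small
cycle u'_0, …, u'_{M-1}, and the two special nodes u_in (`inr (inr false)`)
and u_out (`inr (inr true)`). -/
abbrev EV (M : ℕ) := ZMod (8 * M) ⊕ (ZMod M ⊕ Bool)

def uIn (M : ℕ) : EV M := Sum.inr (Sum.inr false)
def uOut (M : ℕ) : EV M := Sum.inr (Sum.inr true)

/-- The edges of the element E_{i+1} (positive index). External edges
(u_in - a and u_out + a) are left undefined here. -/
noncomputable def posMove (r M : ℕ) (i : Fin r) : EV M → DirK r → Option (EV M) :=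
  fun v d =>
    let Mz : ZMod (8 * M) := (M : ZMod (8 * M))
    match v, d with
    | .inl j, .inl true => some (.inl (j + 1))
    | .inl j, .inl false => some (.inl (j - 1))
    | .inl j, .inr (s, sg) =>
        if s = i then
          if j = Mz then some (.inl (-Mz))
          else if j = -Mz then some (.inl Mz)
          else if j = 2 * Mz then some (.inl (if sg then 3 * Mz else -(3 * Mz)))
          else if j = 3 * Mz then some (.inl (if sg then -(2 * Mz) else 2 * Mz))
          else if j = -(2 * Mz) then some (.inl (if sg then -(3 * Mz) else 3 * Mz))
          else if j = -(3 * Mz) then some (.inl (if sg then 2 * Mz else -(2 * Mz)))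
          else if j = 4 * Mz then
            (if sg then some (.inr (.inl 0)) else some (.inr (.inr false)))
          else if j = 0 then
            (if sg = true ∧ i.val = 0 then some (.inr (.inr true)) else none)
          else some (.inl j)
        else
          if j = 0 then
            (if s.val = 0 ∧ sg = true then some (.inr (.inr true)) else none)
          else some (.inl j)
    | .inr (.inl j'), .inl true => some (.inr (.inl (j' + 1)))
    | .inr (.inl j'), .inl false => some (.inr (.inl (j' - 1)))
    | .inr (.inl j'), .inr (s, sg) =>
        if j' = 0 ∧ s = i then
          (if sg then some (.inr (.inr false)) else some (.inl (4 * Mz)))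
        else some (.inr (.inl j'))
    | .inr (.inr false), .inl _ => none
    | .inr (.inr false), .inr (s, sg) =>
        if s = i then
          (if sg then some (.inl (4 * Mz)) else some (.inr (.inl 0)))
        else none
    | .inr (.inr true), .inl _ => none
    | .inr (.inr true), .inr (s, sg) =>
        if s.val = 0 ∧ sg = false then some (.inl 0) else none

/-- Swap the directions b_{i+1} and -b_{i+1}. -/
def flipI (r : ℕ) (i : Fin r) : DirK r → DirK r
  | .inr (j, s) => if j = i then .inr (j, !s) else .inr (j, s)
  | .inl s => .inl s

/-- The edges of the element E_{±(i+1)}: `σ = true` gives E_{i+1} and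
`σ = false` gives E_{-(i+1)} (with b_{i+1} and -b_{i+1} swapped). -/
noncomputable def elemMove (r M : ℕ) (i : Fin r) (σ : Bool) (v : EV M) (d : DirK r) :
    Option (EV M) :=
  posMove r M i v (if σ then d else flipI r i d)

/-- Node labels of the element E_{±(i+1)}. -/
noncomputable def elemLab (r M : ℕ) (i : Fin r) (σ : Bool) : EV M → LabK r
  | .inl j => if j = 0 then .inr 1 else .inr 0
  | .inr (.inl _) => .inr 0
  | .inr (.inr false) => .inl (i, σ)
  | .inr (.inr true) => .inr 2

/-! Computations of a walker inside the element E_{i+1}. -/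

noncomputable def eRun (r M : ℕ) (i : Fin r) (A : GWA (SK r)) (c : A.Q × EV M)
    (t : ℕ) : Option (A.Q × EV M) :=
  A.runOn (elemMove r M i true) (elemLab r M i true) c t

noncomputable def eState (r M : ℕ) (i : Fin r) (A : GWA (SK r)) (c : A.Q × EV M)
    (t : ℕ) : Option A.Q :=
  (eRun r M i A c t).map Prod.fst

noncomputable def eNode (r M : ℕ) (i : Fin r) (A : GWA (SK r)) (c : A.Q × EV M)
    (t : ℕ) : Option (EV M) :=
  (eRun r M i A c t).map Prod.snd

noncomputable def eDir (r M : ℕ) (i : Fin r) (A : GWA (SK r)) (c : A.Q × EV M)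
    (t : ℕ) : Option (DirK r) :=
  (eRun r M i A c t).bind fun x => (A.δ x.1 (elemLab r M i true x.2)).map Prod.snd

/-- A teleporting move: a move in a direction ±b_{i+1} made at one of the
nodes u_M, u_{-M}. -/
def Teleport (r M : ℕ) (i : Fin r) (A : GWA (SK r)) (c : A.Q × EV M) (t : ℕ) : Prop :=
  (eNode r M i A c t = some (Sum.inl ((M : ZMod (8 * M)))) ∨
    eNode r M i A c t = some (Sum.inl (-(M : ZMod (8 * M))))) ∧
  ∃ s : Bool, eDir r M i A c t = some (Sum.inr (i, s))

/-!
Lift the walker's position on the main cycle to an integer `z`, starting from `z = M`. A move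
`±a` changes `z` by `±1`, a teleport `u_{±M} → u_{∓M}` is `z ↦ -z`, and every other `±b` move
is a loop as long as `z` stays in `(-2M, 2M)` away from `0`. The moves repeat with period
`p ≤ M` and positive drift in direction `a`, so over any time window the walker's
`a`-displacement is at least `1 - p`. Hence after its last teleport (or the start) the walker
stays in `[anchor + 1 - p, anchor + M]`, where `anchor = ±M` is the node it landed on, and the
right end of that interval (`u_{2M}` or `u_0`) is reached only at time `T`. After an even
number of teleports the anchor is `M` and the walker ends at `u_{2M}`; after an odd number it
is `-M` and the walker ends at `u_0`.
-/

open Finset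

theorem ZMod.intCast_eq_intCast_iff_of_lt {n : ℕ} {a b : ℤ} (h₁ : a - b < n) (h₂ : b - a < n) :
    (a : ZMod n) = b ↔ a = b := by
  rw [ZMod.intCast_eq_intCast_iff_dvd_sub]
  refine ⟨fun h => ?_, fun h => by simp [h]⟩
  have := Int.eq_zero_of_abs_lt_dvd h (abs_lt.2 ⟨by omega, by omega⟩)
  omega

theorem sum_Ico_add_period {g : ℕ → ℤ} {p T : ℕ} (hper : ∀ t, t + p < T → g (t + p) = g t)
    {u : ℕ} (hu : u + p ≤ T) : ∑ s ∈ Ico u (u + p), g s = ∑ s ∈ range p, g s := by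
  induction u with
  | zero => rw [zero_add, range_eq_Ico]
  | succ u ih =>
    have hshift : ∑ s ∈ Ico u (u + p + 1), g s = g u + ∑ s ∈ Ico (u + 1) (u + 1 + p), g s := by
      rw [sum_eq_sum_Ico_succ_bot (by omega), Nat.add_right_comm]
    rw [sum_Ico_succ_top (by omega), hper u (by omega), ih (by omega)] at hshift
    omega

theorem one_sub_le_sum_Ico_of_periodic {g : ℕ → ℤ} {p T : ℕ} (hg : ∀ t, -1 ≤ g t)
    (hper : ∀ t, t + p < T → g (t + p) = g t) (hpos : 0 < ∑ s ∈ range p, g s) :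
    ∀ n u, u + n ≤ T → 1 - (p : ℤ) ≤ ∑ s ∈ Ico u (u + n), g s := by
  have hp : 0 < p := Nat.pos_of_ne_zero (by rintro rfl; simp at hpos)
  intro n
  induction n using Nat.strong_induction_on with
  | _ n ih =>
    intro u hn
    by_cases hnp : n < p
    · have := card_nsmul_le_sum (Ico u (u + n)) (fun s => g s) (-1) (fun s _ => hg s)
      simp only [Nat.card_Ico, Nat.add_sub_cancel_left, nsmul_eq_mul, mul_neg_one] at this
      omega
    · rw [← sum_Ico_consecutive _ (Nat.le_add_right u p) (by omega : u + p ≤ u + n),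
        sum_Ico_add_period hper (by omega)]
      have := ih (n - p) (by omega) (u + p) (by omega)
      rw [show u + p + (n - p) = u + n by omega] at this
      omega

theorem GWA.runOn_succ_of_ne_none {S : Signature} (A : GWA S) {V : Type}
    {move : V → S.Dir → Option V} {lab : V → S.Lab} {c : A.Q × V} {t : ℕ} {x : A.Q × V}
    (hx : A.runOn move lab c t = some x) (hnext : A.runOn move lab c (t + 1) ≠ none) :
    ∃ q d, A.δ x.1 (lab x.2) = some (q, d) ∧
      A.runOn move lab c (t + 1) = (move x.2 d).map fun w => (q, w) := by
  simp only [GWA.runOn, hx, Option.bind_some, GWA.stepOn] at hnext ⊢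
  split_ifs at hnext ⊢
  · exact absurd rfl hnext
  · cases hδ : A.δ x.1 (lab x.2) with
    | none => simp [hδ] at hnext
    | some qd => exact ⟨qd.1, qd.2, rfl, by simp⟩

section DiodeElement

variable {r M : ℕ} (i : Fin r)

theorem elemMove_inl_inl (j : ZMod (8 * M)) (s : Bool) :
    elemMove r M i true (.inl j) (.inl s) = some (.inl (j + if s then 1 else -1)) := by
  cases s <;> simp [elemMove, posMove, sub_eq_add_neg]

theorem elemMove_inl_inr {z : ℤ} (hM : 0 < M) (hlo : -(2 * M : ℤ) < z) (hhi : z < 2 * M)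
    (hz : z ≠ 0) (j : Fin r) (s : Bool) :
    elemMove r M i true (.inl z) (.inr (j, s)) =
      some (.inl ↑(if j = i ∧ (z = M ∨ z = -M) then -z else z)) := by
  have cast_iff : ∀ w : ℤ, -(4 * M : ℤ) ≤ w ∧ w ≤ 4 * M → ((z : ZMod (8 * M)) = w ↔ z = w) :=
    fun w hw => ZMod.intCast_eq_intCast_iff_of_lt (by push_cast; omega) (by push_cast; omega)
  have e₀ : (z : ZMod (8 * M)) = 0 ↔ z = 0 := by exact_mod_cast cast_iff 0 (by omega)
  have e₁ : (z : ZMod (8 * M)) = M ↔ z = M := by exact_mod_cast cast_iff M (by omega)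
  have e₂ : (z : ZMod (8 * M)) = 2 * M ↔ z = 2 * M := by exact_mod_cast cast_iff (2 * M) (by omega)
  have e₃ : (z : ZMod (8 * M)) = 3 * M ↔ z = 3 * M := by exact_mod_cast cast_iff (3 * M) (by omega)
  have e₄ : (z : ZMod (8 * M)) = 4 * M ↔ z = 4 * M := by exact_mod_cast cast_iff (4 * M) (by omega)
  have e₁' : (z : ZMod (8 * M)) = -M ↔ z = -M := by simpa using cast_iff (-M) (by omega)
  have e₂' : (z : ZMod (8 * M)) = -(2 * M) ↔ z = -(2 * M) := by
    simpa using cast_iff (-(2 * M)) (by omega)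
  have e₃' : (z : ZMod (8 * M)) = -(3 * M) ↔ z = -(3 * M) := by
    simpa using cast_iff (-(3 * M)) (by omega)
  simp only [elemMove, if_true, posMove, e₀, e₁, e₂, e₃, e₄, e₁', e₂', e₃']
  split_ifs <;> first | omega | simp_all

end DiodeElement

section Walker

variable {r M : ℕ} {i : Fin r} {A : GWA (SK r)} {c : A.Q × EV M}

theorem eNode_succ_of_ne_none {t : ℕ} {v : EV M} (hv : eNode r M i A c t = some v)
    (hnext : eRun r M i A c (t + 1) ≠ none) :
    ∃ d, eDir r M i A c t = some d ∧ eNode r M i A c (t + 1) = elemMove r M i true v d := by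
  obtain ⟨⟨q, v⟩, hx, rfl⟩ := Option.map_eq_some_iff.1 hv
  obtain ⟨q', d, hδ, hrun⟩ := A.runOn_succ_of_ne_none hx hnext
  refine ⟨d, by simp only [eDir, hx, Option.bind_some, hδ]; rfl, ?_⟩
  simp only [eNode, eRun, hrun, Option.map_map]
  cases elemMove r M i true v d <;> rfl

theorem eDir_eq_of_elemLab {t : ℕ} {v : EV M} {l : LabK r} (hv : eNode r M i A c t = some v)
    (hl : elemLab r M i true v = l) :
    eDir r M i A c t = (eState r M i A c t).bind fun q => (A.δ q l).map Prod.snd := by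
  obtain ⟨⟨q, v⟩, hx, rfl⟩ := Option.map_eq_some_iff.1 hv
  subst hl
  simp only [eDir, hx, Option.bind_some, eState, Option.map_some]
  rfl

variable (r M i A c)

noncomputable def aStep (t : ℕ) : ℤ :=
  if eDir r M i A c t = some (.inl true) then 1
  else if eDir r M i A c t = some (.inl false) then -1 else 0

noncomputable def aDisp (t : ℕ) : ℤ := ∑ s ∈ range t, aStep r M i A c s

noncomputable def teleportCount (t : ℕ) : ℕ :=
  ((range t).filter fun s => Teleport r M i A c s).card

/-- The node `u_{±M}` the walker was last teleported to (or started from). -/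
noncomputable def anchor (t : ℕ) : ℤ := if Even (teleportCount r M i A c t) then M else -M

/-- `z` lifts the walker's position `u_z` to `ℤ`: since time `τ` (just after its last teleport)
it has moved from the anchor by its `a`-displacement, without passing `u_{anchor + M}`. -/
def LiftedAt (t : ℕ) (z : ℤ) : Prop :=
  eNode r M i A c t = some (.inl z) ∧ z ≤ anchor r M i A c t + M ∧
    ∃ τ ≤ t, z = anchor r M i A c t + aDisp r M i A c t - aDisp r M i A c τ

theorem neg_one_le_aStep (t : ℕ) : -1 ≤ aStep r M i A c t := by
  unfold aStep; split_ifs <;> norm_num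

theorem aStep_le_one (t : ℕ) : aStep r M i A c t ≤ 1 := by
  unfold aStep; split_ifs <;> norm_num

theorem anchor_zero : anchor r M i A c 0 = M := by
  simp [anchor, teleportCount]

theorem anchor_eq_or (t : ℕ) : anchor r M i A c t = M ∨ anchor r M i A c t = -M := by
  unfold anchor; split_ifs <;> simp

variable {r M i A c}

theorem sum_range_aStep (p : ℕ) : ∑ s ∈ range p, aStep r M i A c s =
    ((range p).filter fun t => eDir r M i A c t = some (.inl true)).card -
      ((range p).filter fun t => eDir r M i A c t = some (.inl false)).card := by
  have split_step : ∀ s, aStep r M i A c s =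
      (if eDir r M i A c s = some (.inl true) then 1 else 0) -
        (if eDir r M i A c s = some (.inl false) then 1 else 0) := by
    intro s; unfold aStep; split_ifs <;> simp_all
  simp only [split_step, sum_sub_distrib, sum_boole]

theorem aDisp_succ (t : ℕ) :
    aDisp r M i A c (t + 1) = aDisp r M i A c t + aStep r M i A c t :=
  sum_range_succ _ _

theorem anchor_succ (t : ℕ) : anchor r M i A c (t + 1) =
    if Teleport r M i A c t then -anchor r M i A c t else anchor r M i A c t := by
  have hcount : teleportCount r M i A c (t + 1) =
      teleportCount r M i A c t + if Teleport r M i A c t then 1 else 0 := by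
    simp only [teleportCount, range_add_one, filter_insert]
    split_ifs <;> simp [card_insert_of_notMem]
  unfold anchor
  rw [hcount]
  split_ifs <;> simp_all [Nat.even_add_one]

theorem one_sub_le_aDisp_sub {p T : ℕ} (hdef : ∀ t, t ≤ T → eRun r M i A c t ≠ none)
    (hm : ∀ t v, t < T → eNode r M i A c t = some v → elemLab r M i true v = Sum.inr 0)
    (hper : ∀ t, t + p ≤ T → eState r M i A c (t + p) = eState r M i A c t)
    (hdrift : ((range p).filter fun t => eDir r M i A c t = some (.inl false)).card <
      ((range p).filter fun t => eDir r M i A c t = some (.inl true)).card)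
    (u v : ℕ) (huv : u ≤ v) (hv : v ≤ T) :
    1 - (p : ℤ) ≤ aDisp r M i A c v - aDisp r M i A c u := by
  have exists_eNode : ∀ t, t ≤ T → ∃ w, eNode r M i A c t = some w := fun t ht => by
    obtain ⟨x, hx⟩ := Option.ne_none_iff_exists'.1 (hdef t ht)
    exact ⟨x.2, by simp [eNode, hx]⟩
  have hperiodic : ∀ t, t + p < T → aStep r M i A c (t + p) = aStep r M i A c t := by
    intro t ht
    obtain ⟨w, hw⟩ := exists_eNode t (by omega)
    obtain ⟨w', hw'⟩ := exists_eNode (t + p) ht.le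
    simp only [aStep, eDir_eq_of_elemLab hw (hm t w (by omega) hw),
      eDir_eq_of_elemLab hw' (hm (t + p) w' ht hw'), hper t ht.le]
  have hpos : 0 < ∑ s ∈ range p, aStep r M i A c s := by
    rw [sum_range_aStep]; omega
  have := one_sub_le_sum_Ico_of_periodic (neg_one_le_aStep r M i A c) hperiodic hpos
    (v - u) u (by omega)
  rwa [Nat.add_sub_cancel' huv, sum_Ico_eq_sub _ huv] at this

theorem teleport_iff {t : ℕ} {z : ℤ} (hlo : -(2 * M : ℤ) < z) (hhi : z < 2 * M)
    (hnode : eNode r M i A c t = some (.inl z)) :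
    Teleport r M i A c t ↔ (z = M ∨ z = -M) ∧ ∃ s, eDir r M i A c t = some (.inr (i, s)) := by
  have e₁ : (z : ZMod (8 * M)) = M ↔ z = M := by
    exact_mod_cast ZMod.intCast_eq_intCast_iff_of_lt (b := M) (by push_cast; omega)
      (by push_cast; omega)
  have e₁' : (z : ZMod (8 * M)) = -M ↔ z = -M := by
    simpa using ZMod.intCast_eq_intCast_iff_of_lt (n := 8 * M) (b := -M) (by push_cast; omega)
      (by push_cast; omega)
  simp only [Teleport, hnode, Option.some.injEq, Sum.inl.injEq, e₁, e₁']

theorem eNode_succ_of_lifted {t : ℕ} {z : ℤ} (hM : 0 < M) (hlo : -(2 * M : ℤ) < z)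
    (hhi : z < 2 * M) (hz : z ≠ 0) (hnode : eNode r M i A c t = some (.inl z))
    (hnext : eRun r M i A c (t + 1) ≠ none) :
    eNode r M i A c (t + 1) =
      some (.inl ↑(if Teleport r M i A c t then -z else z + aStep r M i A c t)) := by
  obtain ⟨d, hd, hnode'⟩ := eNode_succ_of_ne_none hnode hnext
  simp only [hnode', teleport_iff hlo hhi hnode, hd, aStep]
  rcases d with s | ⟨j, s⟩
  · cases s <;> simp [elemMove_inl_inl]
  · rw [elemMove_inl_inr i hM hlo hhi hz]
    simp [and_comm]

namespace LiftedAt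

variable {t : ℕ} {z : ℤ}

theorem anchor_add_one_sub_le {p : ℕ} (h : LiftedAt r M i A c t z)
    (hwin : ∀ τ ≤ t, 1 - (p : ℤ) ≤ aDisp r M i A c t - aDisp r M i A c τ) :
    anchor r M i A c t + 1 - p ≤ z := by
  obtain ⟨-, -, τ, hτ, hz⟩ := h
  linarith [hwin τ hτ]

theorem lt_anchor_add (h : LiftedAt r M i A c t z) (hM : 0 < M)
    (hfirst : eNode r M i A c t ≠ some (.inl ((2 * M : ℕ) : ZMod (8 * M))) ∧
      (0 < t → eNode r M i A c t ≠ some (.inl 0))) :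
    z < anchor r M i A c t + M := by
  obtain ⟨hnode, hle, -⟩ := h
  refine lt_of_le_of_ne hle fun heq => ?_
  rcases anchor_eq_or r M i A c t with ha | ha
  · exact hfirst.1 (by rw [hnode, heq, ha]; push_cast; ring_nf)
  · have ht : 0 < t := by
      rcases Nat.eq_zero_or_pos t with rfl | ht
      · rw [anchor_zero] at ha; omega
      · exact ht
    exact hfirst.2 ht (by rw [hnode, heq, ha]; simp)

theorem succ {p : ℕ} (h : LiftedAt r M i A c t z) (hM : 0 < M) (hpM : p ≤ M)
    (hlo : anchor r M i A c t + 1 - p ≤ z) (hhi : z < anchor r M i A c t + M)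
    (hnext : eRun r M i A c (t + 1) ≠ none) :
    LiftedAt r M i A c (t + 1)
      (if Teleport r M i A c t then -z else z + aStep r M i A c t) := by
  obtain ⟨hnode, -, τ, hτ, hz⟩ := h
  have ha := anchor_eq_or r M i A c t
  have hz₁ : -(2 * M : ℤ) < z := by omega
  have hz₂ : z < 2 * M := by omega
  have hz₀ : z ≠ 0 := by omega
  refine ⟨eNode_succ_of_lifted hM hz₁ hz₂ hz₀ hnode hnext, ?_⟩
  rw [anchor_succ]
  split_ifs with htel
  · obtain ⟨hzM, -⟩ := (teleport_iff hz₁ hz₂ hnode).1 htel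
    -- `p ≤ M` keeps the walker on its anchor's side of `u_0`, so it teleports from the anchor.
    have hza : z = anchor r M i A c t := by omega
    exact ⟨by omega, t + 1, le_rfl, by omega⟩
  · exact ⟨by linarith [aStep_le_one r M i A c t], τ, by omega, by rw [aDisp_succ]; omega⟩

theorem eNode_eq_iff_even {p : ℕ} (h : LiftedAt r M i A c t z) (hpM : p ≤ M)
    (hlo : anchor r M i A c t + 1 - p ≤ z)
    (hT : eNode r M i A c t = some (.inl ((2 * M : ℕ) : ZMod (8 * M))) ∨
      eNode r M i A c t = some (.inl 0)) :
    eNode r M i A c t = some (.inl ((2 * M : ℕ) : ZMod (8 * M))) ↔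
      Even (teleportCount r M i A c t) := by
  obtain ⟨hnode, hle, -⟩ := h
  unfold anchor at hlo hle
  have e₂ : (z : ZMod (8 * M)) = ((2 * M : ℕ) : ZMod (8 * M)) ↔ z = 2 * M := by
    exact_mod_cast ZMod.intCast_eq_intCast_iff_of_lt (b := 2 * M)
      (by split_ifs at hlo hle <;> push_cast <;> omega)
      (by split_ifs at hlo hle <;> push_cast <;> omega)
  have e₀ : (z : ZMod (8 * M)) = 0 ↔ z = 0 := by
    exact_mod_cast ZMod.intCast_eq_intCast_iff_of_lt (n := 8 * M) (b := 0)
      (by split_ifs at hlo hle <;> push_cast <;> omega)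
      (by split_ifs at hlo hle <;> push_cast <;> omega)
  simp only [hnode, Option.some.injEq, Sum.inl.injEq, e₂, e₀] at hT ⊢
  split_ifs at hlo hle with hev <;> simp only [hev, iff_true, iff_false] <;> omega

end LiftedAt

theorem exists_liftedAt {p T : ℕ} (hM : 0 < M) (hpM : p ≤ M)
    (hc : c.2 = .inl (M : ZMod (8 * M))) (hdef : ∀ t, t ≤ T → eRun r M i A c t ≠ none)
    (hwin : ∀ u v, u ≤ v → v ≤ T → 1 - (p : ℤ) ≤ aDisp r M i A c v - aDisp r M i A c u)
    (hfirst : ∀ t, t < T →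
      eNode r M i A c t ≠ some (.inl ((2 * M : ℕ) : ZMod (8 * M))) ∧
      (0 < t → eNode r M i A c t ≠ some (.inl 0))) :
    ∀ t ≤ T, ∃ z, LiftedAt r M i A c t z := by
  intro t
  induction t with
  | zero =>
    intro _
    refine ⟨M, by simp [eNode, eRun, GWA.runOn, hc], by rw [anchor_zero]; omega, 0, le_rfl, ?_⟩
    rw [anchor_zero, add_sub_cancel_right]
  | succ t ih =>
    intro ht
    obtain ⟨z, hz⟩ := ih (by omega)
    exact ⟨_, hz.succ hM hpM (hz.anchor_add_one_sub_le fun τ hτ => hwin τ t hτ (by omega))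
      (hz.lt_anchor_add hM (hfirst t (by omega))) (hdef (t + 1) ht)⟩

end Walker

theorem stmt15_general (n k r M : ℕ)
    (hM : M = bigM n k)
    (i : Fin r) (A : GWA (SK r)) (hQ : Nat.card A.Q ≤ 4 * n * k)
    (q1 : A.Q) (p T : ℕ) (hpQ : p ≤ Nat.card A.Q)
    (c : A.Q × EV M) (hc : c = (q1, Sum.inl ((M : ZMod (8 * M)))))
    (hdef : ∀ t, t ≤ T → eRun r M i A c t ≠ none)
    (hm : ∀ t v, t < T → eNode r M i A c t = some v →
      elemLab r M i true v = Sum.inr 0)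
    (hper : ∀ t, t + p ≤ T → eState r M i A c (t + p) = eState r M i A c t)
    (hdrift : ((Finset.range p).filter
        (fun t => eDir r M i A c t = some (Sum.inl false))).card <
      ((Finset.range p).filter
        (fun t => eDir r M i A c t = some (Sum.inl true))).card)
    (hT : eNode r M i A c T = some (Sum.inl ((2 * M : ℕ) : ZMod (8 * M))) ∨
      eNode r M i A c T = some (Sum.inl (0 : ZMod (8 * M))))
    (hfirst : ∀ t, t < T →
      eNode r M i A c t ≠ some (Sum.inl ((2 * M : ℕ) : ZMod (8 * M))) ∧
      (0 < t → eNode r M i A c t ≠ some (Sum.inl (0 : ZMod (8 * M))))) :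
    eNode r M i A c T = some (Sum.inl ((2 * M : ℕ) : ZMod (8 * M))) ↔
      Even ((Finset.range T).filter (fun t => Teleport r M i A c t)).card := by
  have hM₀ : 0 < M := by rw [hM]; exact Nat.factorial_pos _
  have hpM : p ≤ M := by rw [hM]; exact hpQ.trans (hQ.trans (Nat.self_le_factorial _))
  have hwin := one_sub_le_aDisp_sub hdef hm hper hdrift
  obtain ⟨z, hz⟩ := exists_liftedAt hM₀ hpM (by rw [hc]) hdef hwin hfirst T le_rfl
  exact hz.eNode_eq_iff_even hpM (hz.anchor_add_one_sub_le fun τ hτ => hwin τ T hτ le_rfl) hT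

/-- a walker in the element E_i, repeating a periodic sequence
of moves over m-labelled nodes with net drift in direction a, which starts at
u_M and first reaches u_{2M} or u_0, reaches the segment beyond u_M (i.e.
u_{2M}) without returning to u_0 if and only if the number of its teleporting
±b_i moves at the pair {u_M, u_{-M}} made on the way is even (if that number
is odd, it is teleported to u_{-M} and, drifting in direction a, it returns
to u_0). -/
theorem stmt15 (n k r M : ℕ) (hn : 2 ≤ n) (hk : 4 ≤ k)
    (hr : r = (k - 2) / 2) (hM : M = bigM n k)
    (i : Fin r) (A : GWA (SK r)) (hQ : Nat.card A.Q ≤ 4 * n * k)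
    (q1 : A.Q) (p T : ℕ) (hp : 1 ≤ p) (hpQ : p ≤ Nat.card A.Q)
    (c : A.Q × EV M) (hc : c = (q1, Sum.inl ((M : ZMod (8 * M)))))
    (hdef : ∀ t, t ≤ T → eRun r M i A c t ≠ none)
    (hm : ∀ t v, t < T → eNode r M i A c t = some v →
      elemLab r M i true v = Sum.inr 0)
    (hper : ∀ t, t + p ≤ T → eState r M i A c (t + p) = eState r M i A c t)
    (hdrift : ((Finset.range p).filter
        (fun t => eDir r M i A c t = some (Sum.inl false))).card <
      ((Finset.range p).filter
        (fun t => eDir r M i A c t = some (Sum.inl true))).card)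
    (hT : eNode r M i A c T = some (Sum.inl ((2 * M : ℕ) : ZMod (8 * M))) ∨
      eNode r M i A c T = some (Sum.inl (0 : ZMod (8 * M))))
    (hfirst : ∀ t, t < T →
      eNode r M i A c t ≠ some (Sum.inl ((2 * M : ℕ) : ZMod (8 * M))) ∧
      (0 < t → eNode r M i A c t ≠ some (Sum.inl (0 : ZMod (8 * M))))) :
    eNode r M i A c T = some (Sum.inl ((2 * M : ℕ) : ZMod (8 * M))) ↔
      Even ((Finset.range T).filter (fun t => Teleport r M i A c t)).card :=
  stmt15_general n k r M hM i A hQ q1 p T hpQ c hc hdef hm hper hdrift hT hfirst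
end
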